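/- Let Ω ⊂ ℝ^d be a bounded domain with Lebesgue measure, let F satisfy (A1)–(A2), let τ > 0, and let u : Ω → [0,∞) be integrable with F(u) ∈ L¹(Ω). Then the functional G(v) = ∫_Ω F(v) dx + (2/τ) ∫_Ω (√v − √u)² dx attains its minimum over the class of nonnegative measurable v : Ω → [0,∞) with F(v) ∈ L¹(Ω); moreover any such minimizer belongs to L^r(Ω). -/

import Mathlib

open Real Set MeasureTheory

set_option maxHeartbeats 1000000

-- growth lemma
lemma growth (F : ℝ → ℝ) (α β r : ℝ) (hα : 0 ≤ α) (hβ : 0 < β) (hr : 1 < r)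
    (hF1 : ContDiffOn ℝ 1 F (Set.Ici 0)) (hF2 : ContDiffOn ℝ 2 F (Set.Ioi 0))
    (hFlow : ∀ s : ℝ, 0 < s → β * s ^ (r - 1) - α ≤ deriv F s) :
    ∃ C : ℝ, ∀ s : ℝ, 0 ≤ s → (β / r) * s ^ r - α * s + C ≤ F s := by
  have hr0 : (0:ℝ) < r := by linarith
  -- min of F on [0,1]
  obtain ⟨z, hz, hzmin⟩ : ∃ z ∈ Icc (0:ℝ) 1, IsMinOn F (Icc 0 1) z := by
    exact (isCompact_Icc).exists_isMinOn (nonempty_Icc.2 zero_le_one)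
      (hF1.continuousOn.mono (by intro x hx; exact hx.1))
  set M := F z with hM
  have hdF : ∀ t : ℝ, 0 < t → HasDerivAt F (deriv F t) t := by
    intro t ht
    have : DifferentiableOn ℝ F (Ioi 0) := hF2.differentiableOn (by norm_num)
    exact ((this t ht).differentiableAt (isOpen_Ioi.mem_nhds ht)).hasDerivAt
  have hdFc : ContinuousOn (deriv F) (Ioi 0) :=
    hF2.continuousOn_deriv_of_isOpen isOpen_Ioi (by norm_num)
  have key : ∀ s : ℝ, 1 ≤ s → F 1 + (β * (s ^ r - 1) / r - α * (s - 1)) ≤ F s := by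
    intro s hs
    have hIcc : uIcc (1:ℝ) s = Icc 1 s := uIcc_of_le hs
    have hsub : Icc (1:ℝ) s ⊆ Ioi 0 := fun x hx => lt_of_lt_of_le one_pos hx.1
    have hint : IntervalIntegrable (deriv F) volume 1 s := by
      apply ContinuousOn.intervalIntegrable
      rw [hIcc]; exact hdFc.mono hsub
    have hftc : ∫ t in (1:ℝ)..s, deriv F t = F s - F 1 := by
      apply intervalIntegral.integral_eq_sub_of_hasDerivAt
      · intro x hx; rw [hIcc] at hx; exact hdF x (hsub hx)
      · exact hint
    have hcomp : ∫ t in (1:ℝ)..s, (β * t ^ (r-1) - α) ≤ ∫ t in (1:ℝ)..s, deriv F t := by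
      apply intervalIntegral.integral_mono_on hs _ hint
      · intro x hx; exact hFlow x (lt_of_lt_of_le one_pos hx.1)
      · apply ContinuousOn.intervalIntegrable
        rw [hIcc]
        exact ContinuousOn.sub (continuousOn_const.mul ((continuousOn_id.rpow_const
          (fun x hx => Or.inl (ne_of_gt (lt_of_lt_of_le one_pos hx.1)))))) continuousOn_const
    have hval : ∫ t in (1:ℝ)..s, (β * t ^ (r-1) - α) = β * (s ^ r - 1) / r - α * (s - 1) := by
      rw [intervalIntegral.integral_sub, intervalIntegral.integral_const,
        intervalIntegral.integral_const_mul, integral_rpow (Or.inl (by linarith))]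
      · have hre : r - 1 + 1 = r := by ring
        rw [hre, Real.one_rpow]
        simp only [smul_eq_mul]; ring
      · apply IntervalIntegrable.const_mul
        apply ContinuousOn.intervalIntegrable
        rw [hIcc]
        exact (continuousOn_id.rpow_const (fun x hx => Or.inl (ne_of_gt (lt_of_lt_of_le one_pos hx.1))))
      · exact intervalIntegrable_const
    rw [hval, hftc] at hcomp
    linarith
  refine ⟨min (M - β / r) (F 1 - β / r + α), fun s hs => ?_⟩
  rcases le_or_gt s 1 with h1 | h1
  · have hs1 : s ^ r ≤ 1 := Real.rpow_le_one hs h1 (le_of_lt hr0)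
    have hM' : M ≤ F s := hzmin ⟨hs, h1⟩
    have : min (M - β / r) (F 1 - β / r + α) ≤ M - β / r := min_le_left _ _
    have hb : 0 < β / r := div_pos hβ hr0
    nlinarith [mul_nonneg hα hs]
  · have := key s (le_of_lt h1)
    have h2 : min (M - β / r) (F 1 - β / r + α) ≤ F 1 - β / r + α := min_le_right _ _
    have hb : 0 < β / r := div_pos hβ hr0
    have : β * (s ^ r - 1) / r = (β / r) * s ^ r - β / r := by ring
    linarith [key s (le_of_lt h1)]

lemma growth2 (F : ℝ → ℝ) (α β r : ℝ) (hα : 0 ≤ α) (hβ : 0 < β) (hr : 1 < r)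
    (hF1 : ContDiffOn ℝ 1 F (Set.Ici 0)) (hF2 : ContDiffOn ℝ 2 F (Set.Ioi 0))
    (hFlow : ∀ s : ℝ, 0 < s → β * s ^ (r - 1) - α ≤ deriv F s) :
    ∃ k B : ℝ, 0 < k ∧ ∀ s : ℝ, 0 ≤ s → k * s ^ r + B ≤ F s := by
  obtain ⟨C, hC⟩ := growth F α β r hα hβ hr hF1 hF2 hFlow
  have hr0 : (0:ℝ) < r := by linarith
  have hk : (0:ℝ) < β / (2 * r) := by positivity
  set s₀ : ℝ := (2 * r * α / β) ^ (r - 1)⁻¹ with hs₀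
  have hs₀0 : 0 ≤ s₀ := Real.rpow_nonneg (by positivity) _
  have habs : ∀ s : ℝ, 0 ≤ s → α * s ≤ (β / (2 * r)) * s ^ r + α * s₀ := by
    intro s hs
    rcases le_or_gt s s₀ with h | h
    · have : α * s ≤ α * s₀ := mul_le_mul_of_nonneg_left h hα
      have : 0 ≤ (β / (2 * r)) * s ^ r := by positivity
      nlinarith [mul_le_mul_of_nonneg_left h hα]
    · have hspos : 0 < s := lt_of_le_of_lt hs₀0 h
      have hpow : s₀ ^ (r - 1) ≤ s ^ (r - 1) :=
        Real.rpow_le_rpow hs₀0 (le_of_lt h) (by linarith)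
      have hs₀pow : s₀ ^ (r - 1) = 2 * r * α / β := by
        rw [hs₀]; exact Real.rpow_inv_rpow (by positivity) (ne_of_gt (by linarith : (0:ℝ) < r - 1))
      have hsplit : s ^ r = s ^ (r - 1) * s := by
        have h := Real.rpow_add hspos (r - 1) 1
        rw [Real.rpow_one] at h
        rw [show r - 1 + 1 = r from by ring] at h
        exact h
      have hα' : α ≤ (β / (2 * r)) * s ^ (r - 1) := by
        rw [hs₀pow] at hpow
        have := mul_le_mul_of_nonneg_left hpow (le_of_lt hk)
        calc α = (β / (2 * r)) * (2 * r * α / β) := by field_simp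
        _ ≤ (β / (2 * r)) * s ^ (r - 1) := this
      have : α * s ≤ ((β / (2 * r)) * s ^ (r - 1)) * s :=
        mul_le_mul_of_nonneg_right hα' (le_of_lt hspos)
      have h2 : 0 ≤ α * s₀ := mul_nonneg hα hs₀0
      rw [hsplit]; nlinarith
  refine ⟨β / (2 * r), C - α * s₀, hk, fun s hs => ?_⟩
  have h1 := hC s hs
  have h2 := habs s hs
  have : β / r * s ^ r = β / (2 * r) * s ^ r + β / (2 * r) * s ^ r := by ring
  linarith



/-- Admissible class for the Fisher–Rao JKO step: nonnegative measurable densities `v`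
on `Ω` with `F(v) ∈ L¹(Ω)`. -/
def FRAdm (d : ℕ) (Ω : Set (Fin d → ℝ)) (F : ℝ → ℝ) (v : (Fin d → ℝ) → ℝ) : Prop :=
  Measurable v ∧ (∀ x, 0 ≤ v x) ∧ MeasureTheory.IntegrableOn (fun x => F (v x)) Ω

/-- The Fisher–Rao JKO functional
`G(v) = ∫_Ω F(v) dx + (2/τ) ∫_Ω (√v − √u)² dx`. -/
noncomputable def FRJKO (d : ℕ) (Ω : Set (Fin d → ℝ)) (F : ℝ → ℝ) (τ : ℝ)
    (u v : (Fin d → ℝ) → ℝ) : ℝ :=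
  (∫ x in Ω, F (v x)) + (2 / τ) * ∫ x in Ω, (Real.sqrt (v x) - Real.sqrt (u x)) ^ 2

/-- the Fisher–Rao JKO functional attains its minimum over the admissible
class, and every minimizer belongs to `L^r(Ω)`. -/
theorem stmt6 (d : ℕ) (Ω : Set (Fin d → ℝ)) (hΩo : IsOpen Ω) (hΩb : Bornology.IsBounded Ω)
    (F : ℝ → ℝ) (α β r : ℝ) (hα : 0 ≤ α) (hβ : 0 < β) (hr : 1 < r)
    (hF1 : ContDiffOn ℝ 1 F (Set.Ici 0)) (hF2 : ContDiffOn ℝ 2 F (Set.Ioi 0))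
    (hF'' : ∀ s : ℝ, 0 < s → 0 < deriv (deriv F) s)
    (hFlow : ∀ s : ℝ, 0 < s → β * s ^ (r - 1) - α ≤ deriv F s)
    (τ : ℝ) (hτ : 0 < τ)
    (u : (Fin d → ℝ) → ℝ) (hu0 : ∀ x, 0 ≤ u x) (hum : Measurable u)
    (huI : IntegrableOn u Ω) (huF : IntegrableOn (fun x => F (u x)) Ω) :
    (∃ v, FRAdm d Ω F v ∧ ∀ w, FRAdm d Ω F w → FRJKO d Ω F τ u v ≤ FRJKO d Ω F τ u w) ∧
    (∀ v, FRAdm d Ω F v → (∀ w, FRAdm d Ω F w → FRJKO d Ω F τ u v ≤ FRJKO d Ω F τ u w) →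
      MemLp v (ENNReal.ofReal r) (volume.restrict Ω)) := by
  have hr0 : (0:ℝ) < r := by linarith
  obtain ⟨k, B, hk, hgr⟩ := growth2 F α β r hα hβ hr hF1 hF2 hFlow
  set c : ℝ := 2 / τ with hc_def
  have hc : 0 < c := by positivity
  have hΩvol : volume Ω < ⊤ := hΩb.measure_lt_top
  haveI : IsFiniteMeasure (volume.restrict Ω) :=
    ⟨by rwa [Measure.restrict_apply_univ]⟩
  have hFcont : ContinuousOn F (Ici 0) := hF1.continuousOn
  -- the pointwise functional
  set Φ : ℝ → ℝ → ℝ := fun a s => F s + c * (Real.sqrt s - Real.sqrt a) ^ 2 with hΦ_def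
  -- continuity of Φ a on Ici 0
  have hΦcont : ∀ a : ℝ, ContinuousOn (Φ a) (Ici 0) := by
    intro a
    apply hFcont.add
    apply ContinuousOn.mul continuousOn_const
    exact ((Real.continuous_sqrt.continuousOn.sub continuousOn_const).pow 2)
  -- strict convexity of F
  have hFstrict : StrictConvexOn ℝ (Ici 0) F := by
    apply strictConvexOn_of_deriv2_pos (convex_Ici 0) hFcont
    intro x hx
    rw [interior_Ici] at hx
    have : deriv^[2] F x = deriv (deriv F) x := by
      simp [Function.iterate_succ, Function.iterate_one]
    rw [this]
    exact hF'' x hx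
  -- strict convexity of Φ a
  have hΦconv : ∀ a : ℝ, 0 ≤ a → StrictConvexOn ℝ (Ici 0) (Φ a) := by
    intro a ha
    have h1 : ConvexOn ℝ (Ici 0) (fun s : ℝ => -((2 * c * Real.sqrt a) • Real.sqrt s)) := by
      have := (strictConcaveOn_sqrt.concaveOn.smul
        (by positivity : (0:ℝ) ≤ 2 * c * Real.sqrt a)).neg
      exact this
    have h2 : ConvexOn ℝ (Ici 0) (fun s : ℝ => c • s + (c * a)) := by
      exact ((convexOn_id (convex_Ici 0)).smul hc.le).add_const _
    have h3 : StrictConvexOn ℝ (Ici 0) (fun s : ℝ =>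
        F s + (-((2 * c * Real.sqrt a) • Real.sqrt s) + (c • s + c * a))) :=
      hFstrict.add_convexOn (h1.add h2)
    apply h3.congr
    intro s hs
    have hss : Real.sqrt s ^ 2 = s := Real.sq_sqrt hs
    have haa : Real.sqrt a ^ 2 = a := Real.sq_sqrt ha
    simp only [smul_eq_mul, hΦ_def]
    nlinarith [hss, haa]
  -- existence of pointwise minimizers
  have exmin : ∀ a : ℝ, ∃ s, s ∈ Ici (0:ℝ) ∧ IsMinOn (Φ (max a 0)) (Ici 0) s := by
    intro a
    set A := max a 0 with hA
    have hA0 : 0 ≤ A := le_max_right _ _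
    set T : ℝ := max 1 ((F 0 + c * A + 1 - B) / k) with hT
    have hT1 : (1:ℝ) ≤ T := le_max_left _ _
    have hT0 : (0:ℝ) ≤ T := by linarith
    set S : ℝ := T ^ r⁻¹ with hS
    have hS0 : 0 ≤ S := Real.rpow_nonneg hT0 _
    have hSr : S ^ r = T := Real.rpow_inv_rpow hT0 (ne_of_gt hr0)
    obtain ⟨x₀, hx₀, hx₀min⟩ := (isCompact_Icc).exists_isMinOn
      (nonempty_Icc.2 hS0) ((hΦcont A).mono (fun y hy => hy.1))
    refine ⟨x₀, hx₀.1, ?_⟩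
    rw [isMinOn_iff]
    intro s hs
    rcases le_or_gt s S with h | h
    · exact isMinOn_iff.mp hx₀min s ⟨hs, h⟩
    · have h0 : Φ A 0 = F 0 + c * A := by
        simp only [hΦ_def, Real.sqrt_zero, zero_sub, neg_sq]
        rw [Real.sq_sqrt hA0]
      have hΦ0 : Φ A x₀ ≤ F 0 + c * A := by
        rw [← h0]; exact isMinOn_iff.mp hx₀min 0 ⟨le_refl 0, hS0⟩
      have hs' : 0 ≤ s := hs
      have hsr : T < s ^ r := by
        rw [← hSr]; exact Real.rpow_lt_rpow hS0 h hr0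
      have hger : F 0 + c * A + 1 ≤ k * s ^ r + B := by
        have h1 : (F 0 + c * A + 1 - B) / k ≤ T := le_max_right _ _
        have := mul_le_mul_of_nonneg_left (le_of_lt hsr) hk.le
        have h2 : k * ((F 0 + c * A + 1 - B) / k) = F 0 + c * A + 1 - B := by
          field_simp
        nlinarith
      have hFs : k * s ^ r + B ≤ F s := hgr s hs'
      have hΦs : F s ≤ Φ A s := by
        simp only [hΦ_def]
        nlinarith [sq_nonneg (Real.sqrt s - Real.sqrt A)]
      linarith
  choose m hm0 hmmin using exmin
  -- uniqueness of minimizers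
  have huniq : ∀ a : ℝ, 0 ≤ a → ∀ x y : ℝ, x ∈ Ici (0:ℝ) → y ∈ Ici (0:ℝ) →
      IsMinOn (Φ a) (Ici 0) x → IsMinOn (Φ a) (Ici 0) y → x = y := by
    intro a ha x y hx hy hxm hym
    exact (hΦconv a ha).eq_of_isMinOn hxm hym hx hy
  -- monotonicity of m
  have hmono : Monotone m := by
    intro a b hab
    by_contra hcon
    push_neg at hcon
    set A := max a 0
    set Bb := max b 0
    have hA0 : (0:ℝ) ≤ A := le_max_right _ _
    have hB0 : (0:ℝ) ≤ Bb := le_max_right _ _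
    have hAB : A ≤ Bb := max_le_max hab le_rfl
    set x := m a
    set y := m b
    have hx0 : (0:ℝ) ≤ x := hm0 a
    have hy0 : (0:ℝ) ≤ y := hm0 b
    have h1 : Φ A x ≤ Φ A y := isMinOn_iff.mp (hmmin a) y (hm0 b)
    have h2 : Φ Bb y ≤ Φ Bb x := isMinOn_iff.mp (hmmin b) x (hm0 a)
    have hpx : Real.sqrt x ^ 2 = x := Real.sq_sqrt hx0
    have hpy : Real.sqrt y ^ 2 = y := Real.sq_sqrt hy0
    have hpA : Real.sqrt A ^ 2 = A := Real.sq_sqrt hA0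
    have hpB : Real.sqrt Bb ^ 2 = Bb := Real.sq_sqrt hB0
    have hpAB : Real.sqrt A ≤ Real.sqrt Bb := Real.sqrt_le_sqrt hAB
    have hpyx : Real.sqrt y < Real.sqrt x := by
      apply Real.sqrt_lt_sqrt hy0 hcon
    simp only [hΦ_def] at h1 h2
    have expand : c * (Real.sqrt x - Real.sqrt A) ^ 2 + c * (Real.sqrt y - Real.sqrt Bb) ^ 2
        - (c * (Real.sqrt y - Real.sqrt A) ^ 2 + c * (Real.sqrt x - Real.sqrt Bb) ^ 2)
        = c * (2 * ((Real.sqrt Bb - Real.sqrt A) * (Real.sqrt x - Real.sqrt y))) := by ring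
    have e2 : c * (2 * ((Real.sqrt Bb - Real.sqrt A) * (Real.sqrt x - Real.sqrt y))) ≤ 0 := by
      linarith [expand]
    have hprod : (Real.sqrt Bb - Real.sqrt A) * (Real.sqrt x - Real.sqrt y) ≤ 0 := by
      by_contra hpos
      push_neg at hpos
      have : 0 < c * (2 * ((Real.sqrt Bb - Real.sqrt A) * (Real.sqrt x - Real.sqrt y))) :=
        mul_pos hc (by linarith)
      linarith
    have hBA : Real.sqrt Bb ≤ Real.sqrt A := by
      by_contra hBA'
      push_neg at hBA'
      have : 0 < (Real.sqrt Bb - Real.sqrt A) * (Real.sqrt x - Real.sqrt y) :=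
        mul_pos (by linarith) (by linarith)
      linarith
    have hsqe : Real.sqrt A = Real.sqrt Bb := le_antisymm hpAB hBA
    have hABeq : A = Bb := by rw [← hpA, ← hpB, hsqe]
    have : x = y := by
      apply huniq A hA0 x y (hm0 a) (hm0 b) (hmmin a)
      rw [hABeq]; exact hmmin b
    exact absurd this (by intro h; rw [h] at hcon; exact lt_irrefl _ hcon)
  have hmmeas : Measurable m := hmono.measurable
  -- the candidate minimizer
  set v : (Fin d → ℝ) → ℝ := fun x => m (u x) with hv_def
  have hvmeas : Measurable v := hmmeas.comp hum
  have hv0 : ∀ x, 0 ≤ v x := fun x => hm0 (u x)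
  have hvmin : ∀ x : (Fin d → ℝ), IsMinOn (Φ (u x)) (Ici 0) (v x) := by
    intro x
    have : max (u x) 0 = u x := max_eq_left (hu0 x)
    have h := hmmin (u x)
    rwa [this] at h
  -- lower bound on F
  have hFlb : ∀ s : ℝ, 0 ≤ s → B ≤ F s := by
    intro s hs
    have := hgr s hs
    nlinarith [Real.rpow_nonneg hs r]
  -- measurability of F ∘ nonneg measurable
  have hFcomp : ∀ g : (Fin d → ℝ) → ℝ, Measurable g → (∀ x, 0 ≤ g x) →
      Measurable (fun x => F (g x)) := by
    intro g hg hg0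
    have hFm : Continuous (fun t : ℝ => F (max t 0)) :=
      ContinuousOn.comp_continuous hFcont (continuous_id.max continuous_const)
        (fun t => mem_Ici.mpr (le_max_right _ _))
    have : (fun x => F (g x)) = (fun t : ℝ => F (max t 0)) ∘ g := by
      funext x; simp [max_eq_left (hg0 x)]
    rw [this]
    exact hFm.measurable.comp hg
  -- F(v) ≤ F(u) pointwise
  have hFvu : ∀ x, F (v x) ≤ F (u x) := by
    intro x
    have h := isMinOn_iff.mp (hvmin x) (u x) (hu0 x)
    simp only [hΦ_def] at h
    nlinarith [sq_nonneg (Real.sqrt (v x) - Real.sqrt (u x)),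
      sq_nonneg (Real.sqrt (u x) - Real.sqrt (u x))]
  -- integrability of F(v) on Ω
  have hFvI : IntegrableOn (fun x => F (v x)) Ω := by
    have hconst : IntegrableOn (fun _ : (Fin d → ℝ) => |B|) Ω :=
      integrableOn_const hΩvol.ne
    apply Integrable.mono' ((huF.norm).add hconst)
    · exact ((hFcomp v hvmeas hv0).aestronglyMeasurable)
    · filter_upwards with x
      simp only [Pi.add_apply]
      have h1 : B ≤ F (v x) := hFlb _ (hv0 x)
      have h2 : F (v x) ≤ F (u x) := hFvu x
      have h3 : F (u x) ≤ |F (u x)| := le_abs_self _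
      have h4 : -|B| ≤ B := neg_abs_le B
      simp only [Real.norm_eq_abs]
      rw [abs_le]
      constructor
      · nlinarith [abs_nonneg (F (u x))]
      · nlinarith [abs_nonneg B]
  have hvAdm : FRAdm d Ω F v := ⟨hvmeas, hv0, hFvI⟩
  -- any admissible function is in L¹ and Lʳ
  have hadm_int : ∀ w : (Fin d → ℝ) → ℝ, FRAdm d Ω F w →
      IntegrableOn (fun x => (w x) ^ r) Ω ∧ IntegrableOn w Ω := by
    intro w ⟨hwm, hw0, hwF⟩
    have hwrm : Measurable (fun x => (w x) ^ r) :=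
      (Real.continuous_rpow_const hr0.le).measurable.comp hwm
    have hconst : IntegrableOn (fun _ : (Fin d → ℝ) => |B|) Ω :=
      integrableOn_const hΩvol.ne
    have hwr : IntegrableOn (fun x => (w x) ^ r) Ω := by
      apply Integrable.mono' (((hwF.norm).add hconst).const_mul (1/k))
      · exact hwrm.aestronglyMeasurable
      · filter_upwards with x
        simp only [Pi.add_apply]
        have h1 := hgr (w x) (hw0 x)
        have h2 : 0 ≤ (w x) ^ r := Real.rpow_nonneg (hw0 x) r
        simp only [Real.norm_eq_abs]
        rw [abs_of_nonneg h2]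
        have h3 : F (w x) ≤ |F (w x)| := le_abs_self _
        have h4 : -|B| ≤ B := neg_abs_le B
        have h5 : k * (w x) ^ r ≤ |F (w x)| + |B| := by linarith
        have h6 := mul_le_mul_of_nonneg_left h5 (le_of_lt (one_div_pos.mpr hk))
        have h7 : 1/k * (k * (w x) ^ r) = (w x) ^ r := by field_simp
        linarith
    have hconst1 : IntegrableOn (fun _ : (Fin d → ℝ) => (1:ℝ)) Ω :=
      integrableOn_const hΩvol.ne
    have hwI : IntegrableOn w Ω := by
      apply Integrable.mono' (hwr.add hconst1 :
        Integrable (fun x => (w x) ^ r + 1) _)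
      · exact hwm.aestronglyMeasurable
      · filter_upwards with x
        simp only [Pi.add_apply]
        rw [Real.norm_eq_abs, abs_of_nonneg (hw0 x)]
        rcases le_or_gt (w x) 1 with h | h
        · have : 0 ≤ (w x) ^ r := Real.rpow_nonneg (hw0 x) r
          linarith
        · have : w x = (w x) ^ (1:ℝ) := (Real.rpow_one _).symm
          rw [this]
          have := Real.rpow_le_rpow_of_exponent_le h.le hr.le
          rw [Real.rpow_one] at this ⊢
          linarith
    exact ⟨hwr, hwI⟩
  -- memℒp for admissible functions
  have hadm_Lr : ∀ w : (Fin d → ℝ) → ℝ, FRAdm d Ω F w →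
      MemLp w (ENNReal.ofReal r) (volume.restrict Ω) := by
    intro w hw
    obtain ⟨hwr, _⟩ := hadm_int w hw
    set p : ENNReal := ENNReal.ofReal r with hp
    have hp0 : p ≠ 0 := by
      simp only [hp, ne_eq, ENNReal.ofReal_eq_zero, not_le]
      linarith
    have hptop : p ≠ ⊤ := ENNReal.ofReal_ne_top
    have hptr : p.toReal = r := ENNReal.toReal_ofReal hr0.le
    refine (memLp_norm_rpow_iff (q := p) hw.1.aestronglyMeasurable hp0 hptop).mp ?_
    rw [ENNReal.div_self hp0 hptop, hptr]
    rw [memLp_one_iff_integrable]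
    have heq : (fun x => ‖w x‖ ^ r) = fun x => (w x) ^ r := by
      funext x; rw [Real.norm_eq_abs, abs_of_nonneg (hw.2.1 x)]
    rw [heq]
    exact hwr
  -- integrability of the sqrt-square terms
  have hsqI : ∀ w : (Fin d → ℝ) → ℝ, FRAdm d Ω F w →
      IntegrableOn (fun x => (Real.sqrt (w x) - Real.sqrt (u x)) ^ 2) Ω := by
    intro w hw
    obtain ⟨_, hwI⟩ := hadm_int w hw
    apply Integrable.mono' (hwI.add huI)
    · exact (((Real.continuous_sqrt.measurable.comp hw.1).sub
        (Real.continuous_sqrt.measurable.comp hum)).pow_const 2).aestronglyMeasurable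
    · filter_upwards with x
      simp only [Pi.add_apply]
      have h1 : Real.sqrt (w x) ^ 2 = w x := Real.sq_sqrt (hw.2.1 x)
      have h2 : Real.sqrt (u x) ^ 2 = u x := Real.sq_sqrt (hu0 x)
      rw [Real.norm_eq_abs, abs_of_nonneg (sq_nonneg _)]
      nlinarith [Real.sqrt_nonneg (w x), Real.sqrt_nonneg (u x),
        mul_nonneg (Real.sqrt_nonneg (w x)) (Real.sqrt_nonneg (u x))]
  -- the minimization property
  have hmin : ∀ w, FRAdm d Ω F w → FRJKO d Ω F τ u v ≤ FRJKO d Ω F τ u w := by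
    intro w hw
    have hptwise : ∀ x, F (v x) + c * (Real.sqrt (v x) - Real.sqrt (u x)) ^ 2 ≤
        F (w x) + c * (Real.sqrt (w x) - Real.sqrt (u x)) ^ 2 := by
      intro x
      exact isMinOn_iff.mp (hvmin x) (w x) (hw.2.1 x)
    have hIv := hsqI v hvAdm
    have hIw := hsqI w hw
    have hcombv : ∫ x in Ω, (F (v x) + c * (Real.sqrt (v x) - Real.sqrt (u x)) ^ 2) =
        (∫ x in Ω, F (v x)) + c * ∫ x in Ω, (Real.sqrt (v x) - Real.sqrt (u x)) ^ 2 := by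
      rw [integral_add hFvI (hIv.const_mul c), integral_const_mul]
    have hcombw : ∫ x in Ω, (F (w x) + c * (Real.sqrt (w x) - Real.sqrt (u x)) ^ 2) =
        (∫ x in Ω, F (w x)) + c * ∫ x in Ω, (Real.sqrt (w x) - Real.sqrt (u x)) ^ 2 := by
      rw [integral_add hw.2.2 (hIw.const_mul c), integral_const_mul]
    have hle : ∫ x in Ω, (F (v x) + c * (Real.sqrt (v x) - Real.sqrt (u x)) ^ 2) ≤
        ∫ x in Ω, (F (w x) + c * (Real.sqrt (w x) - Real.sqrt (u x)) ^ 2) := by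
      apply integral_mono (hFvI.add (hIv.const_mul c)) (hw.2.2.add (hIw.const_mul c))
      intro x
      exact hptwise x
    simp only [FRJKO, ← hc_def]
    rw [← hcombv, ← hcombw] at *
    linarith [hle]
  exact ⟨⟨v, hvAdm, hmin⟩, fun w hw _ => hadm_Lr w hw⟩
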